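/- Let K = K_W be a Gibbs kernel on ℝ^d satisfying LS_loc(ρ) and J₂(κ) for some ρ, κ > 0. Let μ, η be probability measures on ℝ^d, set P := μ×K, and let P* ∈ Π(μ, ηK) minimize Q ↦ H(Q|P) over Π(μ, ηK). Then: (i) H(P*|P) ≤ (ρκ²/2) D₂(μ,η)²; (ii) if μ satisfies T2(υ) for some υ > 0, then H(P*|P) ≤ κ²ρυ H(η|μ); (iii) if η satisfies T2(υ) for some υ > 0, then H(P*|P) ≤ κ²ρυ H(μ|η). -/

import Mathlib

open MeasureTheory ProbabilityTheory ENNReal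
open scoped RealInnerProductSpace Classical

noncomputable section

/-- Euclidean space `ℝ^d`. -/
abbrev Ed (d : ℕ) : Type := EuclideanSpace ℝ (Fin d)

/-- Relative entropy `H(ν | μ)`: `∫ log (dν/dμ) dν` when `ν ≪ μ` and the
log-likelihood ratio is integrable, `∞` otherwise. -/
def relEnt {α : Type*} [MeasurableSpace α] (ν μ : Measure α) : ℝ≥0∞ :=
  if ν ≪ μ ∧ Integrable (MeasureTheory.llr ν μ) ν then
    ENNReal.ofReal (∫ x, MeasureTheory.llr ν μ x ∂ν) else ⊤

/-- `P` is a coupling of `μ` and `ν`. -/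
def isCoupling {α β : Type*} [MeasurableSpace α] [MeasurableSpace β]
    (P : Measure (α × β)) (μ : Measure α) (ν : Measure β) : Prop :=
  P.map Prod.fst = μ ∧ P.map Prod.snd = ν

/-- Squared 2-Wasserstein distance. -/
def W2sq {d : ℕ} (μ ν : Measure (Ed d)) : ℝ≥0∞ :=
  ⨅ (P : Measure (Ed d × Ed d)) (_ : isCoupling P μ ν),
    ∫⁻ p, ENNReal.ofReal (‖p.1 - p.2‖ ^ 2) ∂P

/-- Quadratic transportation cost inequality `T2(ρ)`. -/
def SatT2 {d : ℕ} (μ : Measure (Ed d)) (ρ : ℝ) : Prop :=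
  ∀ ν : Measure (Ed d), IsProbabilityMeasure ν →
    (1 / 2 : ℝ≥0∞) * W2sq ν μ ≤ ENNReal.ofReal ρ * relEnt ν μ

/-- Transport of a measure by a Markov kernel: `μK`. -/
def mbind {d : ℕ} (μ : Measure (Ed d)) (K : Kernel (Ed d) (Ed d)) : Measure (Ed d) :=
  μ.bind fun x => K x

/-- `K` is the Gibbs kernel with potential `W`: `K(x,dy) = e^{-W(x,y)} dy`,
with `W` measurable and `y ↦ W(x,y)` of class `C¹`. -/
def IsGibbs {d : ℕ} (Wf : Ed d → Ed d → ℝ) (K : Kernel (Ed d) (Ed d)) : Prop :=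
  Measurable (Function.uncurry Wf) ∧ (∀ x, ContDiff ℝ 1 (Wf x)) ∧
    ∀ x, K x = (volume : Measure (Ed d)).withDensity fun y => ENNReal.ofReal (Real.exp (-Wf x y))

/-- Fisher information cost of a Gibbs kernel. -/
def fisherCost {d : ℕ} (Wf : Ed d → Ed d → ℝ) (K : Kernel (Ed d) (Ed d)) (x₁ x₂ : Ed d) : ℝ≥0∞ :=
  ∫⁻ y, ENNReal.ofReal (‖gradient (Wf x₁) y - gradient (Wf x₂) y‖ ^ 2) ∂(K x₁)

/-- Local log-Sobolev inequality `LS_loc(ρ)` for a Gibbs kernel. -/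
def LSloc {d : ℕ} (Wf : Ed d → Ed d → ℝ) (K : Kernel (Ed d) (Ed d)) (ρ : ℝ) : Prop :=
  ∀ x₁ x₂ : Ed d, relEnt (K x₁) (K x₂) ≤ ENNReal.ofReal (ρ / 2) * fisherCost Wf K x₁ x₂

/-- Fisher–Lipschitz inequality `J₂(κ)` for a Gibbs kernel. -/
def FisherLip {d : ℕ} (Wf : Ed d → Ed d → ℝ) (K : Kernel (Ed d) (Ed d)) (κ : ℝ) : Prop :=
  ∀ x₁ x₂ : Ed d, fisherCost Wf K x₁ x₂ ≤ ENNReal.ofReal (κ ^ 2 * ‖x₁ - x₂‖ ^ 2)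

/-- Entropic transport cost `E_K(ν | μ)`. -/
def entCost {d : ℕ} (K : Kernel (Ed d) (Ed d)) (ν μ : Measure (Ed d)) : ℝ≥0∞ :=
  ⨅ (P : Measure (Ed d × Ed d)) (_ : isCoupling P ν μ),
    ∫⁻ p, relEnt (K p.1) (K p.2) ∂P

/-- `φ(ε) = ε⁻¹ / (√(1/4 + ε⁻¹) + 1/2)`. -/
def phi (ε : ℝ) : ℝ := ε⁻¹ / (Real.sqrt (1 / 4 + ε⁻¹) + 1 / 2)

/-- Application of a matrix to a vector of `ℝ^d`. -/
def mApp {d : ℕ} (M : Matrix (Fin d) (Fin d) ℝ) (x : Ed d) : Ed d :=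
  Matrix.toEuclideanLin M x

/-- Spectral norm of a matrix. -/
def spec {d : ℕ} (M : Matrix (Fin d) (Fin d) ℝ) : ℝ :=
  ‖LinearMap.toContinuousLinearMap (Matrix.toEuclideanLin M)‖

/-- Loewner order on matrices. -/
def loewnerLE {d : ℕ} (A B : Matrix (Fin d) (Fin d) ℝ) : Prop := (B - A).PosSemidef

/-- Principal square root of a positive semidefinite matrix (junk value otherwise). -/
def msqrt {d : ℕ} (A : Matrix (Fin d) (Fin d) ℝ) : Matrix (Fin d) (Fin d) ℝ :=
  if h : A.PosSemidef then
    h.1.eigenvectorUnitary.1 *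
      Matrix.diagonal ((↑) ∘ (NNReal.sqrt ∘ Real.toNNReal) ∘ h.1.eigenvalues) *
      (star h.1.eigenvectorUnitary : Matrix (Fin d) (Fin d) ℝ)
  else 0

/-- Smallest eigenvalue of a symmetric matrix (junk value otherwise). -/
def lmin {d : ℕ} (A : Matrix (Fin d) (Fin d) ℝ) : ℝ :=
  if h : A.IsHermitian then ⨅ i, h.eigenvalues i else 0

/-- Largest eigenvalue of a symmetric matrix (junk value otherwise). -/
def lmax {d : ℕ} (A : Matrix (Fin d) (Fin d) ℝ) : ℝ :=
  if h : A.IsHermitian then ⨆ i, h.eigenvalues i else 0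

/-- Riccati map `Ricc_ϖ(s) = (I + (ϖ + s)⁻¹)⁻¹`. -/
def Ricc {d : ℕ} (ϖ s : Matrix (Fin d) (Fin d) ℝ) : Matrix (Fin d) (Fin d) ℝ :=
  (1 + (ϖ + s)⁻¹)⁻¹

/-- Fixed point `r_ϖ = -ϖ/2 + (ϖ + (ϖ/2)²)^{1/2}` of the Riccati map. -/
def riccFix {d : ℕ} (ϖ : Matrix (Fin d) (Fin d) ℝ) : Matrix (Fin d) (Fin d) ℝ :=
  -((1 / 2 : ℝ) • ϖ) + msqrt (ϖ + ((1 / 2 : ℝ) • ϖ) ^ 2)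

/-- `Ψ_γ(v) = (I + γ v γᵀ)⁻¹`. -/
def Psim {d : ℕ} (γ v : Matrix (Fin d) (Fin d) ℝ) : Matrix (Fin d) (Fin d) ℝ :=
  (1 + γ * v * γ.transpose)⁻¹

/-- Hessian lower bound `∇²U ≥ M` (as quadratic forms). -/
def HessLB {d : ℕ} (U : Ed d → ℝ) (M : Matrix (Fin d) (Fin d) ℝ) : Prop :=
  ∀ x v : Ed d, ⟪v, mApp M v⟫ ≤ iteratedFDeriv ℝ 2 U x ![v, v]

/-- Hessian upper bound `∇²U ≤ M` (as quadratic forms). -/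
def HessUB {d : ℕ} (U : Ed d → ℝ) (M : Matrix (Fin d) (Fin d) ℝ) : Prop :=
  ∀ x v : Ed d, iteratedFDeriv ℝ 2 U x ![v, v] ≤ ⟪v, mApp M v⟫

/-- Linear-Gaussian reference potential `W(x,y) = -log g_τ(y - (α + βx))`. -/
def gaussW {d : ℕ} (a : Ed d) (β τ : Matrix (Fin d) (Fin d) ℝ) (x y : Ed d) : ℝ :=
  -Real.log ((Real.sqrt ((2 * Real.pi) ^ d * τ.det))⁻¹ *
    Real.exp (-(1 / 2) * ⟪y - (mApp β x + a), mApp τ⁻¹ (y - (mApp β x + a))⟫))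

/-- Boltzmann–Gibbs measure `λ_U(dx) = e^{-U(x)} dx`. -/
def gibbsDensity {d : ℕ} (U : Ed d → ℝ) : Measure (Ed d) :=
  (volume : Measure (Ed d)).withDensity fun x => ENNReal.ofReal (Real.exp (-U x))

/-- Conditional covariance `Σ_K(x) = (1/2) ∫∫ (y-z)(y-z)ᵀ K(x,dy) K(x,dz)`. -/
def condCov {d : ℕ} (K : Kernel (Ed d) (Ed d)) (x : Ed d) : Matrix (Fin d) (Fin d) ℝ :=
  Matrix.of fun i j =>
    (1 / 2) * ∫ p : Ed d × Ed d, (p.1 i - p.2 i) * (p.1 j - p.2 j) ∂((K x).prod (K x))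

/-- Barycentric projection `K(I)(x) = ∫ y K(x,dy)`. -/
def bary {d : ℕ} (K : Kernel (Ed d) (Ed d)) (x : Ed d) : Ed d := ∫ y, y ∂(K x)

/-- Gradient matrix of a vector field: `(i,j)` entry is `∂ᵢ hʲ(x)`. -/
def gradMat {d : ℕ} (h : Ed d → Ed d) (x : Ed d) : Matrix (Fin d) (Fin d) ℝ :=
  Matrix.of fun i j => gradient (fun x' => h x' j) x i

/-- Sinkhorn marginal flow `π_n`. -/
def piSeq {d : ℕ} (μ η : Measure (Ed d)) (K : ℕ → Kernel (Ed d) (Ed d)) (n : ℕ) :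
    Measure (Ed d) :=
  if n % 2 = 0 then mbind μ (K n) else mbind η (K n)

/-- Sinkhorn bridges `𝒫_n`. -/
def PSeq {d : ℕ} (μ η : Measure (Ed d)) (K : ℕ → Kernel (Ed d) (Ed d)) (n : ℕ) :
    Measure (Ed d × Ed d) :=
  if n % 2 = 0 then μ ⊗ₘ K n else (η ⊗ₘ K n).map Prod.swap

/-- `n`-fold composition of a Markov kernel. -/
def kpow {d : ℕ} (S : Kernel (Ed d) (Ed d)) : ℕ → Kernel (Ed d) (Ed d)
  | 0 => Kernel.id
  | n + 1 => (kpow S n) ∘ₖ S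

end


section BridgeAux

open MeasureTheory ProbabilityTheory ENNReal
open scoped Classical

lemma aux_mul_max_neg_log_le_one {t : ℝ} (ht : 0 ≤ t) : t * max (-Real.log t) 0 ≤ 1 := by
  rcases eq_or_lt_of_le ht with h | h
  · simp [← h]
  rcases le_or_gt 1 t with h1 | h1
  · have hl : 0 ≤ Real.log t := Real.log_nonneg h1
    rw [max_eq_right (by linarith)]
    simp
  · have hlog : Real.log t⁻¹ ≤ t⁻¹ - 1 := Real.log_le_sub_one_of_pos (by positivity)
    rw [Real.log_inv] at hlog
    have hmax : max (-Real.log t) 0 ≤ t⁻¹ := by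
      refine max_le (by linarith [inv_pos.mpr h]) (by positivity)
    calc t * max (-Real.log t) 0 ≤ t * t⁻¹ := by
          exact mul_le_mul_of_nonneg_left hmax ht
      _ = 1 := mul_inv_cancel₀ h.ne'

lemma aux_max_neg_le_exp (s : ℝ) : max (-s) 0 ≤ Real.exp (-s) :=
  max_le (by linarith [Real.add_one_le_exp (-s)]) (Real.exp_nonneg _)

lemma aux_max_le {a b w : ℝ} (h : a ≤ b + (w - 1)) (hw : 0 ≤ w) : max a 0 ≤ max b 0 + w :=
  max_le (h.trans (by linarith [le_max_left b 0])) (add_nonneg (le_max_right b 0) hw)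

lemma aux_abs_eq {a : ℝ} : |a| = max a 0 + max (-a) 0 := by
  rcases le_total a 0 with h | h
  · rw [abs_of_nonpos h, max_eq_right h, max_eq_left (by linarith)]; ring
  · rw [abs_of_nonneg h, max_eq_left h, max_eq_right (by linarith)]; ring

lemma aux_max_eq_add {a : ℝ} : max a 0 = a + max (-a) 0 := by
  rcases le_total a 0 with h | h
  · rw [max_eq_right h, max_eq_left (by linarith)]; ring
  · rw [max_eq_left h, max_eq_right (by linarith)]; ring

lemma relEnt_facts {α : Type*} [MeasurableSpace α] {ν μ : Measure α} {b : ℝ}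
    (hb : 0 ≤ b) (h : relEnt ν μ ≤ ENNReal.ofReal b) :
    ν ≪ μ ∧ Integrable (llr ν μ) ν ∧ ∫ x, llr ν μ x ∂ν ≤ b := by
  rw [relEnt] at h
  split_ifs at h with hc
  · exact ⟨hc.1, hc.2, (ENNReal.ofReal_le_ofReal_iff hb).mp h⟩
  · exact absurd (top_le_iff.mp h) ENNReal.ofReal_ne_top

lemma gibbs_withDensity {d : ℕ} {Wf : Ed d → Ed d → ℝ} {K : Kernel (Ed d) (Ed d)}
    (hWm : Measurable (Function.uncurry Wf))
    (hK : ∀ x, K x = (volume : Measure (Ed d)).withDensity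
      fun y => ENNReal.ofReal (Real.exp (-Wf x y))) (x z : Ed d) :
    K z = (K x).withDensity fun y => ENNReal.ofReal (Real.exp (Wf x y - Wf z y)) := by
  have hx : Measurable fun y => ENNReal.ofReal (Real.exp (-Wf x y)) :=
    (Real.measurable_exp.comp (hWm.comp measurable_prodMk_left).neg).ennreal_ofReal
  have hxz : Measurable fun y => ENNReal.ofReal (Real.exp (Wf x y - Wf z y)) :=
    (Real.measurable_exp.comp ((hWm.comp measurable_prodMk_left).sub
      (hWm.comp measurable_prodMk_left))).ennreal_ofReal
  rw [hK x, hK z, ← withDensity_mul _ hx hxz]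
  congr 1
  funext y
  simp only [Pi.mul_apply]
  rw [← ENNReal.ofReal_mul (Real.exp_nonneg _), ← Real.exp_add]
  congr 2
  ring

lemma W2sq_le_symm {d : ℕ} (μ η : Measure (Ed d)) : W2sq μ η ≤ W2sq η μ := by
  rw [W2sq, W2sq]
  refine le_iInf₂ fun Pc hPc => ?_
  have hcost : Measurable fun p : Ed d × Ed d => ENNReal.ofReal (‖p.1 - p.2‖ ^ 2) :=
    (((measurable_fst.sub measurable_snd).norm.pow measurable_const)).ennreal_ofReal
  have hswap : isCoupling (Pc.map Prod.swap) μ η := by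
    constructor
    · rw [Measure.map_map measurable_fst measurable_swap]
      exact hPc.2
    · rw [Measure.map_map measurable_snd measurable_swap]
      exact hPc.1
  refine iInf₂_le_of_le (Pc.map Prod.swap) hswap (le_of_eq ?_)
  rw [lintegral_map hcost measurable_swap]
  refine lintegral_congr fun p => ?_
  simp only [Prod.fst_swap, Prod.snd_swap]
  rw [norm_sub_rev]

/-- negative-part bound for log-density -/
lemma neg_llr_part_le {α : Type*} [MeasurableSpace α] (P : Measure α) [IsProbabilityMeasure P]
    (f : α → ℝ≥0∞) (hf : Measurable f) :
    ∫⁻ p, ENNReal.ofReal (max (-Real.log (f p).toReal) 0) ∂(P.withDensity f) ≤ 1 := by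
  have hm : Measurable fun p => ENNReal.ofReal (max (-Real.log ((f p).toReal)) 0) :=
    ((Real.measurable_log.comp hf.ennreal_toReal).neg.max measurable_const).ennreal_ofReal
  rw [lintegral_withDensity_eq_lintegral_mul P hf hm]
  calc ∫⁻ p, (f * fun p => ENNReal.ofReal (max (-Real.log (f p).toReal) 0)) p ∂P
      ≤ ∫⁻ _, 1 ∂P := by
        refine lintegral_mono fun p => ?_
        simp only [Pi.mul_apply]
        rcases eq_or_ne (f p) ⊤ with h | h
        · simp [h]
        · nth_rewrite 1 [← ENNReal.ofReal_toReal h]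
          rw [← ENNReal.ofReal_mul ENNReal.toReal_nonneg]
          exact ENNReal.ofReal_le_one.mpr (aux_mul_max_neg_log_le_one ENNReal.toReal_nonneg)
    _ = 1 := by simp

theorem key_bound
    {d : ℕ} (Wf : Ed d → Ed d → ℝ) (K : Kernel (Ed d) (Ed d)) [IsMarkovKernel K]
    (hWm : Measurable (Function.uncurry Wf))
    (hK : ∀ x, K x = (volume : Measure (Ed d)).withDensity
      fun y => ENNReal.ofReal (Real.exp (-Wf x y)))
    (c : ℝ) (hc : 0 < c)
    (hLS : ∀ x z : Ed d, relEnt (K z) (K x) ≤ ENNReal.ofReal (c * ‖x - z‖ ^ 2))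
    (μ η : Measure (Ed d)) [IsProbabilityMeasure μ] [IsProbabilityMeasure η]
    (π : Measure (Ed d × Ed d)) [IsProbabilityMeasure π]
    (hπ1 : π.map Prod.fst = μ) (hπ2 : π.map Prod.snd = η) :
    ∃ Q : Measure (Ed d × Ed d), IsProbabilityMeasure Q ∧ isCoupling Q μ (mbind η K) ∧
      relEnt Q (μ ⊗ₘ K) ≤ ∫⁻ p, ENNReal.ofReal (c * ‖p.1 - p.2‖ ^ 2) ∂π := by
  classical
  -- basic measurability for W
  have hW1 : ∀ x, Measurable (Wf x) := fun x => hWm.comp measurable_prodMk_left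
  set K₂ : Kernel (Ed d × Ed d) (Ed d) := K.comap Prod.snd measurable_snd with hK₂
  have hf : Measurable fun q : (Ed d × Ed d) × Ed d => (q.1.1, q.2) :=
    (measurable_fst.comp measurable_fst).prodMk measurable_snd
  set f : (Ed d × Ed d) × Ed d → Ed d × Ed d := fun q => (q.1.1, q.2) with hfdef
  set Q'' : Measure ((Ed d × Ed d) × Ed d) := π ⊗ₘ K₂ with hQ''
  set Q : Measure (Ed d × Ed d) := Q''.map f with hQ
  have hQprob : IsProbabilityMeasure Q := Measure.isProbabilityMeasure_map hf.aemeasurable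
  -- marginals
  have hQfst : Q.map Prod.fst = μ := by
    rw [hQ, Measure.map_map measurable_fst hf]
    have : (Prod.fst ∘ f) = (Prod.fst ∘ (Prod.fst : (Ed d × Ed d) × Ed d → Ed d × Ed d)) := rfl
    rw [this, ← Measure.map_map measurable_fst measurable_fst]
    have h1 : Q''.map Prod.fst = π := Measure.fst_compProd π K₂
    rw [h1, hπ1]
  have hQsnd : Q.map Prod.snd = mbind η K := by
    rw [hQ, Measure.map_map measurable_snd hf]
    have : (Prod.snd ∘ f) = (Prod.snd : (Ed d × Ed d) × Ed d → Ed d) := rfl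
    rw [this]
    ext s hs
    rw [Measure.map_apply measurable_snd hs, hQ'',
      Measure.compProd_apply (measurable_snd hs)]
    have hsec : ∀ p : Ed d × Ed d, (Prod.mk p ⁻¹' (Prod.snd ⁻¹' s) : Set (Ed d)) = s := by
      intro p; rfl
    simp_rw [hsec]
    have : ∀ p : Ed d × Ed d, K₂ p s = K p.2 s := fun p => rfl
    simp_rw [this]
    rw [mbind, Measure.bind_apply hs (Kernel.measurable K).aemeasurable,
      ← lintegral_map (Kernel.measurable_coe K hs) measurable_snd, hπ2]
  -- disintegration
  have hdis : μ ⊗ₘ π.condKernel = π := by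
    have h1 : π.fst = μ := hπ1
    conv_rhs => rw [← π.disintegrate π.condKernel]
    rw [h1]
  set ρK := π.condKernel with hρK
  set g : Ed d → Ed d → ℝ≥0∞ :=
    fun x y => ∫⁻ z, ENNReal.ofReal (Real.exp (Wf x y - Wf z y)) ∂(ρK x) with hg
  set Gp : Ed d × Ed d → ℝ≥0∞ := fun p => g p.1 p.2 with hGpdef
  have huncW : Measurable (Function.uncurry fun (p : Ed d × Ed d) (z : Ed d) =>
      ENNReal.ofReal (Real.exp (Wf p.1 p.2 - Wf z p.2))) := by
    have m1 : Measurable fun q : (Ed d × Ed d) × Ed d => Wf q.1.1 q.1.2 :=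
      hWm.comp ((measurable_fst.comp measurable_fst).prodMk (measurable_snd.comp measurable_fst))
    have m2 : Measurable fun q : (Ed d × Ed d) × Ed d => Wf q.2 q.1.2 :=
      hWm.comp (measurable_snd.prodMk (measurable_snd.comp measurable_fst))
    exact (m1.sub m2).exp.ennreal_ofReal
  have hGp : Measurable Gp := by
    have := Measurable.lintegral_kernel_prod_right (κ := ρK.comap Prod.fst measurable_fst) huncW
    exact this
  have hgx : ∀ x, Measurable (g x) := fun x => hGp.comp measurable_prodMk_left
  have hgpos : ∀ x y, 0 < g x y := by
    intro x y
    have hW2 : Measurable fun z : Ed d => Wf z y :=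
      hWm.comp (measurable_id.prodMk measurable_const)
    have hm : Measurable fun z : Ed d => ENNReal.ofReal (Real.exp (Wf x y - Wf z y)) :=
      (measurable_const.sub hW2).exp.ennreal_ofReal
    rw [hg]
    simp only []
    rw [lintegral_pos_iff_support hm]
    have hsupp : Function.support (fun z => ENNReal.ofReal (Real.exp (Wf x y - Wf z y)))
        = Set.univ :=
      Set.eq_univ_of_forall fun z => (ENNReal.ofReal_pos.mpr (Real.exp_pos _)).ne'
    rw [hsupp, measure_univ]
    exact zero_lt_one
  have hKz : ∀ x z : Ed d, K z = (K x).withDensity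
      fun y => ENNReal.ofReal (Real.exp (Wf x y - Wf z y)) := gibbs_withDensity hWm hK
  have hdens_meas : ∀ x z : Ed d,
      Measurable fun y => ENNReal.ofReal (Real.exp (Wf x y - Wf z y)) :=
    fun x z => ((hW1 x).sub (hW1 z)).exp.ennreal_ofReal
  have hKz_univ : ∀ x z : Ed d, ∫⁻ y, ENNReal.ofReal (Real.exp (Wf x y - Wf z y)) ∂(K x) = 1 := by
    intro x z
    have h2 := hKz x z
    have : (K z) Set.univ = ∫⁻ y, ENNReal.ofReal (Real.exp (Wf x y - Wf z y)) ∂(K x) := by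
      rw [h2, withDensity_apply _ MeasurableSet.univ, Measure.restrict_univ]
    rw [← this, measure_univ]
  have hgint1 : ∀ x, ∫⁻ y, g x y ∂(K x) = 1 := by
    intro x
    have hswap : ∫⁻ y, g x y ∂(K x)
        = ∫⁻ z, ∫⁻ y, ENNReal.ofReal (Real.exp (Wf x y - Wf z y)) ∂(K x) ∂(ρK x) := by
      rw [hg]
      simp only []
      refine lintegral_lintegral_swap ?_
      have m1 : Measurable fun q : Ed d × Ed d => Wf x q.1 := (hW1 x).comp measurable_fst
      have m2 : Measurable fun q : Ed d × Ed d => Wf q.2 q.1 :=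
        hWm.comp (measurable_snd.prodMk measurable_fst)
      exact ((m1.sub m2).exp.ennreal_ofReal).aemeasurable
    rw [hswap]
    simp_rw [hKz_univ x]
    simp
  have hgfin : ∀ x, ∀ᵐ y ∂(K x), g x y ≠ ⊤ := fun x =>
    (ae_lt_top (hgx x) (by rw [hgint1 x]; exact one_ne_top)).mono fun y hy => hy.ne
  -- density representation
  set P : Measure (Ed d × Ed d) := μ ⊗ₘ K with hP
  have hQd : Q = P.withDensity Gp := by
    ext s hs
    rw [hQ, Measure.map_apply hf hs, hQ'', Measure.compProd_apply (hf hs)]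
    have hmeasK : Measurable fun p : Ed d × Ed d => K₂ p (Prod.mk p ⁻¹' (f ⁻¹' s)) :=
      Kernel.measurable_kernel_prodMk_left (κ := K₂) (hf hs)
    calc ∫⁻ p, K₂ p (Prod.mk p ⁻¹' (f ⁻¹' s)) ∂π
        = ∫⁻ x, ∫⁻ z, K z (Prod.mk x ⁻¹' s) ∂ρK x ∂μ := by
          rw [← hdis, Measure.lintegral_compProd hmeasK]
          rfl
      _ = ∫⁻ x, ∫⁻ y in Prod.mk x ⁻¹' s, g x y ∂K x ∂μ := by
          refine lintegral_congr fun x => ?_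
          have ht : MeasurableSet (Prod.mk x ⁻¹' s) := measurable_prodMk_left hs
          have e1 : ∀ z : Ed d, K z (Prod.mk x ⁻¹' s)
              = ∫⁻ y in Prod.mk x ⁻¹' s, ENNReal.ofReal (Real.exp (-Wf z y)) ∂volume := by
            intro z
            rw [hK z, withDensity_apply _ ht]
          simp_rw [e1]
          have hswap2 : ∫⁻ z, ∫⁻ y in Prod.mk x ⁻¹' s,
                ENNReal.ofReal (Real.exp (-Wf z y)) ∂volume ∂ρK x
              = ∫⁻ y in Prod.mk x ⁻¹' s, ∫⁻ z,
                ENNReal.ofReal (Real.exp (-Wf z y)) ∂ρK x ∂volume := by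
            refine lintegral_lintegral_swap ?_
            exact ((hWm.comp (measurable_fst.prodMk measurable_snd)).neg.exp.ennreal_ofReal).aemeasurable
          rw [hswap2]
          have e2 : ∀ y : Ed d, ∫⁻ z, ENNReal.ofReal (Real.exp (-Wf z y)) ∂ρK x
              = ENNReal.ofReal (Real.exp (-Wf x y)) * g x y := by
            intro y
            rw [hg]
            simp only []
            have hW2 : Measurable fun z : Ed d => Wf z y :=
              hWm.comp (measurable_id.prodMk measurable_const)
            rw [← lintegral_const_mul _ (f := fun z : Ed d => ENNReal.ofReal (Real.exp (Wf x y - Wf z y))) ((measurable_const.sub hW2).exp.ennreal_ofReal :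
              Measurable fun z : Ed d => ENNReal.ofReal (Real.exp (Wf x y - Wf z y)))]
            refine lintegral_congr fun z => ?_
            rw [← ENNReal.ofReal_mul (Real.exp_nonneg _), ← Real.exp_add]
            congr 2
            ring
          rw [lintegral_congr fun y => e2 y]
          rw [hK x, restrict_withDensity ht, lintegral_withDensity_eq_lintegral_mul _
            (f := fun y => ENNReal.ofReal (Real.exp (-Wf x y))) ((hW1 x).neg.exp.ennreal_ofReal) (hgx x)]
          rfl
      _ = (P.withDensity Gp) s := by
          rw [withDensity_apply _ hs, hP]
          rw [← lintegral_indicator hs, Measure.lintegral_compProd (hGp.indicator hs)]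
          refine lintegral_congr fun x => ?_
          rw [← lintegral_indicator (measurable_prodMk_left hs)]
          refine lintegral_congr fun y => ?_
          by_cases hm : (x, y) ∈ s
          · rw [Set.indicator_of_mem (show y ∈ Prod.mk x ⁻¹' s from hm),
              Set.indicator_of_mem hm]
          · rw [Set.indicator_of_notMem (show y ∉ Prod.mk x ⁻¹' s from hm),
              Set.indicator_of_notMem hm]
  -- absolute continuity and llr identification
  have hac : Q ≪ P := by rw [hQd]; exact withDensity_absolutelyContinuous P Gp
  have hllrQ : llr Q P =ᵐ[Q] fun p => Real.log (Gp p).toReal := by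
    have h1 : Q.rnDeriv P =ᵐ[P] Gp := by
      rw [hQd]; exact Measure.rnDeriv_withDensity P hGp
    have h2 : llr Q P =ᵐ[P] fun p => Real.log (Gp p).toReal := by
      filter_upwards [h1] with p hp
      show Real.log (Q.rnDeriv P p).toReal = _
      rw [hp]
    exact hac.ae_le h2
  -- per-pair base facts from the LSI hypothesis
  have hpairBase : ∀ x z : Ed d, Integrable (fun y => Wf x y - Wf z y) (K z) ∧
      ∫ y, (Wf x y - Wf z y) ∂(K z) ≤ c * ‖x - z‖ ^ 2 := by
    intro x z
    obtain ⟨hac', hint', hval'⟩ := relEnt_facts (by positivity) (hLS x z)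
    have h1 : (K z).rnDeriv (K x) =ᵐ[K x]
        fun y => ENNReal.ofReal (Real.exp (Wf x y - Wf z y)) := by
      conv_lhs => rw [hKz x z]
      exact Measure.rnDeriv_withDensity (K x) (hdens_meas x z)
    have h2 : llr (K z) (K x) =ᵐ[K x] fun y => Wf x y - Wf z y := by
      filter_upwards [h1] with y hy
      show Real.log ((K z).rnDeriv (K x) y).toReal = _
      rw [hy, ENNReal.toReal_ofReal (Real.exp_nonneg _), Real.log_exp]
    have hllrzx : llr (K z) (K x) =ᵐ[K z] fun y => Wf x y - Wf z y := hac'.ae_le h2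
    exact ⟨hint'.congr hllrzx, by rw [← integral_congr_ae hllrzx]; exact hval'⟩
  -- the per-pair analytic estimates
  have pairfacts : ∀ x z : Ed d,
      (∫⁻ y, ENNReal.ofReal (max (Real.log (g x y).toReal) 0) ∂(K z)
        ≤ ENNReal.ofReal (c * ‖x - z‖ ^ 2 + 1) + 1) ∧
      (Integrable (fun y => Real.log (g x y).toReal) (K z) →
        ∫ y, Real.log (g x y).toReal ∂(K z) ≤ c * ‖x - z‖ ^ 2) := by
    intro x z
    obtain ⟨hBint, hBval⟩ := hpairBase x z
    have hKzx := hKz x z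
    have hacz : K z ≪ K x := by
      rw [hKzx]; exact withDensity_absolutelyContinuous _ _
    have hgfinz : ∀ᵐ y ∂(K z), g x y ≠ ⊤ := hacz.ae_le (hgfin x)
    have hw_nonneg : ∀ y, 0 ≤ (g x y).toReal * Real.exp (-(Wf x y - Wf z y)) :=
      fun y => mul_nonneg ENNReal.toReal_nonneg (Real.exp_nonneg _)
    have hw_meas : Measurable fun y => (g x y).toReal * Real.exp (-(Wf x y - Wf z y)) :=
      ((hgx x).ennreal_toReal).mul ((hW1 x).sub (hW1 z)).neg.exp
    have hw_lint : ∫⁻ y, ENNReal.ofReal ((g x y).toReal * Real.exp (-(Wf x y - Wf z y)))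
        ∂(K z) = 1 := by
      conv_lhs => rw [hKzx]
      rw [lintegral_withDensity_eq_lintegral_mul _ (hdens_meas x z) hw_meas.ennreal_ofReal]
      have hpt : ∀ y, ((fun y => ENNReal.ofReal (Real.exp (Wf x y - Wf z y))) *
          fun y => ENNReal.ofReal ((g x y).toReal * Real.exp (-(Wf x y - Wf z y)))) y
          = ENNReal.ofReal ((g x y).toReal) := by
        intro y
        simp only [Pi.mul_apply]
        rw [← ENNReal.ofReal_mul (Real.exp_nonneg _)]
        congr 1
        rw [Real.exp_neg]
        field_simp
      rw [lintegral_congr hpt]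
      have : ∫⁻ y, ENNReal.ofReal ((g x y).toReal) ∂(K x) = ∫⁻ y, g x y ∂(K x) := by
        refine lintegral_congr_ae ?_
        filter_upwards [hgfin x] with y hy
        rw [ENNReal.ofReal_toReal hy]
      rw [this, hgint1 x]
    have hw_int : Integrable (fun y => (g x y).toReal * Real.exp (-(Wf x y - Wf z y))) (K z) := by
      refine ⟨hw_meas.aestronglyMeasurable, ?_⟩
      rw [hasFiniteIntegral_iff_ofReal (Filter.Eventually.of_forall hw_nonneg), hw_lint]
      exact one_lt_top
    have hw_val : ∫ y, (g x y).toReal * Real.exp (-(Wf x y - Wf z y)) ∂(K z) = 1 := by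
      rw [integral_eq_lintegral_of_nonneg_ae (Filter.Eventually.of_forall hw_nonneg)
        hw_meas.aestronglyMeasurable, hw_lint, ENNReal.toReal_one]
    have hpt : ∀ᵐ y ∂(K z), Real.log (g x y).toReal ≤ (Wf x y - Wf z y) +
        ((g x y).toReal * Real.exp (-(Wf x y - Wf z y)) - 1) := by
      filter_upwards [hgfinz] with y hy
      have hgpos' : 0 < (g x y).toReal := ENNReal.toReal_pos (hgpos x y).ne' hy
      have hwpos : 0 < (g x y).toReal * Real.exp (-(Wf x y - Wf z y)) :=
        mul_pos hgpos' (Real.exp_pos _)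
      have hlog := Real.log_le_sub_one_of_pos hwpos
      rw [Real.log_mul hgpos'.ne' (Real.exp_ne_zero _), Real.log_exp] at hlog
      linarith
    constructor
    · -- positive part estimate
      have hexp_lint : ∫⁻ y, ENNReal.ofReal (Real.exp (-(Wf x y - Wf z y))) ∂(K z) = 1 := by
        conv_lhs => rw [hKzx]
        rw [lintegral_withDensity_eq_lintegral_mul _ (hdens_meas x z)
          (g := fun y => ENNReal.ofReal (Real.exp (-(Wf x y - Wf z y))))
          (((hW1 x).sub (hW1 z)).neg.exp.ennreal_ofReal)]
        have hpt2 : ∀ y, ((fun y => ENNReal.ofReal (Real.exp (Wf x y - Wf z y))) *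
            fun y => ENNReal.ofReal (Real.exp (-(Wf x y - Wf z y)))) y = 1 := by
          intro y
          simp only [Pi.mul_apply]
          rw [← ENNReal.ofReal_mul (Real.exp_nonneg _), ← Real.exp_add]
          simp
        rw [lintegral_congr hpt2]
        simp
      have hexp_int : Integrable (fun y => Real.exp (-(Wf x y - Wf z y))) (K z) := by
        refine ⟨(((hW1 x).sub (hW1 z)).neg.exp).aestronglyMeasurable, ?_⟩
        rw [hasFiniteIntegral_iff_ofReal
          (Filter.Eventually.of_forall fun y => Real.exp_nonneg _), hexp_lint]
        exact one_lt_top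
      have hnegh_int : Integrable (fun y => max (-(Wf x y - Wf z y)) 0) (K z) :=
        hBint.neg.pos_part
      have hnegh : ∫ y, max (-(Wf x y - Wf z y)) 0 ∂(K z) ≤ 1 := by
        calc ∫ y, max (-(Wf x y - Wf z y)) 0 ∂(K z)
            ≤ ∫ y, Real.exp (-(Wf x y - Wf z y)) ∂(K z) :=
              integral_mono hnegh_int hexp_int fun y => aux_max_neg_le_exp _
          _ = 1 := by
              rw [integral_eq_lintegral_of_nonneg_ae (f := fun y => Real.exp (-(Wf x y - Wf z y)))
                (Filter.Eventually.of_forall fun y => Real.exp_nonneg _)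
                (((hW1 x).sub (hW1 z)).neg.exp).aestronglyMeasurable, hexp_lint,
                ENNReal.toReal_one]
      have hmaxh_int : Integrable (fun y => max (Wf x y - Wf z y) 0) (K z) := hBint.pos_part
      have hmaxh_val : ∫ y, max (Wf x y - Wf z y) 0 ∂(K z) ≤ c * ‖x - z‖ ^ 2 + 1 := by
        have he : ∫ y, max (Wf x y - Wf z y) 0 ∂(K z)
            = ∫ y, (Wf x y - Wf z y) ∂(K z) + ∫ y, max (-(Wf x y - Wf z y)) 0 ∂(K z) := by
          rw [← integral_add hBint hnegh_int]
          exact integral_congr_ae (Filter.Eventually.of_forall fun y => aux_max_eq_add)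
        rw [he]
        exact add_le_add hBval hnegh
      calc ∫⁻ y, ENNReal.ofReal (max (Real.log (g x y).toReal) 0) ∂(K z)
          ≤ ∫⁻ y, (ENNReal.ofReal (max (Wf x y - Wf z y) 0)
              + ENNReal.ofReal ((g x y).toReal * Real.exp (-(Wf x y - Wf z y)))) ∂(K z) := by
            refine lintegral_mono_ae ?_
            filter_upwards [hpt] with y hy
            calc ENNReal.ofReal (max (Real.log (g x y).toReal) 0)
                ≤ ENNReal.ofReal (max (Wf x y - Wf z y) 0
                    + (g x y).toReal * Real.exp (-(Wf x y - Wf z y))) :=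
                  ENNReal.ofReal_le_ofReal (aux_max_le hy (hw_nonneg y))
              _ ≤ _ := ENNReal.ofReal_add_le
        _ = ∫⁻ y, ENNReal.ofReal (max (Wf x y - Wf z y) 0) ∂(K z)
              + ∫⁻ y, ENNReal.ofReal ((g x y).toReal * Real.exp (-(Wf x y - Wf z y))) ∂(K z) :=
            lintegral_add_left ((((hW1 x).sub (hW1 z)).max measurable_const).ennreal_ofReal) _
        _ ≤ ENNReal.ofReal (c * ‖x - z‖ ^ 2 + 1) + 1 := by
            rw [hw_lint]
            refine add_le_add ?_ le_rfl
            rw [← ofReal_integral_eq_lintegral_ofReal hmaxh_int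
              (Filter.Eventually.of_forall fun y => le_max_right _ _)]
            exact ENNReal.ofReal_le_ofReal hmaxh_val
    · -- integral value estimate
      intro hAint
      have hsub : ∫ y, (Real.log (g x y).toReal - (Wf x y - Wf z y)) ∂(K z)
          ≤ ∫ y, ((g x y).toReal * Real.exp (-(Wf x y - Wf z y)) - 1) ∂(K z) := by
        refine integral_mono_ae (hAint.sub hBint) (hw_int.sub (integrable_const 1)) ?_
        filter_upwards [hpt] with y hy
        linarith
      rw [integral_sub hAint hBint, integral_sub hw_int (integrable_const 1)] at hsub
      simp only [integral_const, measure_univ, ENNReal.toReal_one, smul_eq_mul, one_mul,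
        probReal_univ] at hsub
      rw [hw_val] at hsub
      linarith
  -- conclusion
  refine ⟨Q, hQprob, ⟨hQfst, hQsnd⟩, ?_⟩
  rcases eq_or_ne (∫⁻ p, ENNReal.ofReal (c * ‖p.1 - p.2‖ ^ 2) ∂π) ⊤ with hR | hR
  · rw [hR]
    exact le_top
  have hAmeas : Measurable fun p : Ed d × Ed d => Real.log (Gp p).toReal :=
    Real.measurable_log.comp hGp.ennreal_toReal
  have hrep : ∀ F : Ed d × Ed d → ℝ≥0∞, Measurable F →
      ∫⁻ p, F p ∂Q = ∫⁻ p, ∫⁻ y, F (p.1, y) ∂(K p.2) ∂π := by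
    intro F hF
    rw [hQ, lintegral_map hF hf, hQ'']
    exact Measure.lintegral_compProd (hF.comp hf)
  have hC_meas : Measurable fun p : Ed d × Ed d => c * ‖p.1 - p.2‖ ^ 2 :=
    measurable_const.mul ((measurable_fst.sub measurable_snd).norm.pow measurable_const)
  -- positive part of the log-density is integrable
  have hPos : ∫⁻ p, ENNReal.ofReal (max (Real.log (Gp p).toReal) 0) ∂Q ≠ ⊤ := by
    have h1 : ∫⁻ p, ENNReal.ofReal (max (Real.log (Gp p).toReal) 0) ∂Q
        ≤ ∫⁻ p : Ed d × Ed d, (ENNReal.ofReal (c * ‖p.1 - p.2‖ ^ 2 + 1) + 1) ∂π := by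
      rw [hrep _ ((hAmeas.max measurable_const).ennreal_ofReal)]
      exact lintegral_mono fun p => (pairfacts p.1 p.2).1
    have h2 : ∀ p : Ed d × Ed d, ENNReal.ofReal (c * ‖p.1 - p.2‖ ^ 2 + 1) + 1
        ≤ ENNReal.ofReal (c * ‖p.1 - p.2‖ ^ 2) + 2 := by
      intro p
      rw [ENNReal.ofReal_add (by positivity) zero_le_one, ENNReal.ofReal_one]
      rw [add_assoc]
      exact add_le_add le_rfl (by norm_num)
    have h3 : ∫⁻ p : Ed d × Ed d, (ENNReal.ofReal (c * ‖p.1 - p.2‖ ^ 2 + 1) + 1) ∂π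
        ≤ ∫⁻ p, ENNReal.ofReal (c * ‖p.1 - p.2‖ ^ 2) ∂π + 2 := by
      refine le_trans (lintegral_mono h2) ?_
      rw [lintegral_add_right _ measurable_const, lintegral_const, measure_univ, mul_one]
    exact ne_top_of_le_ne_top (ENNReal.add_ne_top.mpr ⟨hR, ENNReal.ofNat_ne_top⟩)
      (h1.trans h3)
  have hNeg : ∫⁻ p, ENNReal.ofReal (max (-Real.log (Gp p).toReal) 0) ∂Q ≤ 1 := by
    rw [hQd]
    exact neg_llr_part_le P Gp hGp
  have hAint : Integrable (fun p => Real.log (Gp p).toReal) Q := by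
    refine ⟨hAmeas.aestronglyMeasurable, ?_⟩
    show ∫⁻ p, (‖Real.log (Gp p).toReal‖₊ : ℝ≥0∞) ∂Q < ⊤
    have heq : ∀ p : Ed d × Ed d, (‖Real.log (Gp p).toReal‖₊ : ℝ≥0∞)
        = ENNReal.ofReal (max (Real.log (Gp p).toReal) 0)
          + ENNReal.ofReal (max (-Real.log (Gp p).toReal) 0) := by
      intro p
      rw [← enorm_eq_nnnorm, Real.enorm_eq_ofReal_abs, aux_abs_eq,
        ENNReal.ofReal_add (le_max_right _ _) (le_max_right _ _)]
    rw [lintegral_congr heq, lintegral_add_left ((hAmeas.max measurable_const).ennreal_ofReal)]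
    exact ENNReal.add_lt_top.mpr ⟨hPos.lt_top, lt_of_le_of_lt hNeg one_lt_top⟩
  have hllr_int : Integrable (llr Q P) Q := hAint.congr hllrQ.symm
  -- value bound via the compProd representation
  have hCint : Integrable (fun p : Ed d × Ed d => c * ‖p.1 - p.2‖ ^ 2) π := by
    refine ⟨hC_meas.aestronglyMeasurable, ?_⟩
    rw [hasFiniteIntegral_iff_ofReal (Filter.Eventually.of_forall fun p => by positivity)]
    exact hR.lt_top
  have hAint' : Integrable (fun p => Real.log (Gp p).toReal) (Q''.map f) := by
    rw [hQ] at hAint; exact hAint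
  have hAf_int : Integrable ((fun p => Real.log (Gp p).toReal) ∘ f) Q'' :=
    (integrable_map_measure hAmeas.aestronglyMeasurable hf.aemeasurable).mp hAint'
  have hIsec : ∀ᵐ p ∂π, Integrable (fun y => Real.log (Gp (p.1, y)).toReal) (K p.2) := by
    have h0 : AEStronglyMeasurable ((fun p => Real.log (Gp p).toReal) ∘ f) Q'' :=
      (hAmeas.comp hf).aestronglyMeasurable
    have := ((Measure.integrable_compProd_iff h0).mp hAf_int).1
    exact this
  have hNorm_int : Integrable
      (fun p : Ed d × Ed d => ∫ y, ‖Real.log (Gp (p.1, y)).toReal‖ ∂(K p.2)) π := by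
    have h0 : AEStronglyMeasurable ((fun p => Real.log (Gp p).toReal) ∘ f) Q'' :=
      (hAmeas.comp hf).aestronglyMeasurable
    have := ((Measure.integrable_compProd_iff h0).mp hAf_int).2
    exact this
  have hval_inner : ∀ᵐ p ∂π, ∫ y, Real.log (Gp (p.1, y)).toReal ∂(K p.2)
      ≤ c * ‖p.1 - p.2‖ ^ 2 := by
    filter_upwards [hIsec] with p hp
    exact (pairfacts p.1 p.2).2 hp
  have hInner_meas : StronglyMeasurable
      (fun p : Ed d × Ed d => ∫ y, Real.log (Gp (p.1, y)).toReal ∂(K p.2)) := by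
    have := StronglyMeasurable.integral_kernel_prod_right' (κ := K₂)
      ((hAmeas.comp hf).stronglyMeasurable)
    exact this
  have hInner_int : Integrable
      (fun p : Ed d × Ed d => ∫ y, Real.log (Gp (p.1, y)).toReal ∂(K p.2)) π := by
    refine hNorm_int.mono hInner_meas.aestronglyMeasurable ?_
    refine Filter.Eventually.of_forall fun p => ?_
    have h1 : ‖∫ y, Real.log (Gp (p.1, y)).toReal ∂(K p.2)‖
        ≤ ∫ y, ‖Real.log (Gp (p.1, y)).toReal‖ ∂(K p.2) := norm_integral_le_integral_norm _
    exact h1.trans (le_abs_self _)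
  have hval : ∫ p, Real.log (Gp p).toReal ∂Q ≤ ∫ p, c * ‖p.1 - p.2‖ ^ 2 ∂π := by
    have e1 : ∫ p, Real.log (Gp p).toReal ∂Q
        = ∫ q, Real.log (Gp (f q)).toReal ∂Q'' := by
      rw [hQ, integral_map hf.aemeasurable hAmeas.aestronglyMeasurable]
    have e2 : ∫ q, Real.log (Gp (f q)).toReal ∂Q''
        = ∫ p, ∫ y, Real.log (Gp (p.1, y)).toReal ∂(K p.2) ∂π := by
      rw [hQ'']
      exact Measure.integral_compProd hAf_int
    rw [e1, e2]
    exact integral_mono_ae hInner_int hCint hval_inner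
  have hrelEq : relEnt Q P = ENNReal.ofReal (∫ p, llr Q P p ∂Q) := by
    rw [relEnt, if_pos ⟨hac, hllr_int⟩]
  rw [hP] at hrelEq ⊢
  rw [hrelEq, integral_congr_ae hllrQ]
  calc ENNReal.ofReal (∫ p, Real.log (Gp p).toReal ∂Q)
      ≤ ENNReal.ofReal (∫ p : Ed d × Ed d, c * ‖p.1 - p.2‖ ^ 2 ∂π) :=
        ENNReal.ofReal_le_ofReal hval
    _ = ∫⁻ p, ENNReal.ofReal (c * ‖p.1 - p.2‖ ^ 2) ∂π :=
        ofReal_integral_eq_lintegral_ofReal hCint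
          (Filter.Eventually.of_forall fun p => by positivity)


end BridgeAux

/-- entropic continuity bounds for the Schrödinger bridge with a
Gibbs reference kernel satisfying `LS_loc(ρ)` and `J₂(κ)`. -/
theorem bridge_entropy_bounds
    (d : ℕ) (hd : 1 ≤ d)
    (Wf : Ed d → Ed d → ℝ) (K : Kernel (Ed d) (Ed d)) [IsMarkovKernel K]
    (hG : IsGibbs Wf K) (ρ κ : ℝ) (hρ : 0 < ρ) (hκ : 0 < κ)
    (hLS : LSloc Wf K ρ) (hJ : FisherLip Wf K κ)
    (μ η : Measure (Ed d)) [IsProbabilityMeasure μ] [IsProbabilityMeasure η]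
    (Pstar : Measure (Ed d × Ed d)) [IsProbabilityMeasure Pstar]
    (hco : isCoupling Pstar μ (mbind η K))
    (hmin : ∀ Q : Measure (Ed d × Ed d), IsProbabilityMeasure Q →
      isCoupling Q μ (mbind η K) → relEnt Pstar (μ ⊗ₘ K) ≤ relEnt Q (μ ⊗ₘ K)) :
    relEnt Pstar (μ ⊗ₘ K) ≤ ENNReal.ofReal (ρ * κ ^ 2 / 2) * W2sq μ η ∧
    (∀ υ : ℝ, 0 < υ → SatT2 μ υ →
      relEnt Pstar (μ ⊗ₘ K) ≤ ENNReal.ofReal (κ ^ 2 * ρ * υ) * relEnt η μ) ∧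
    (∀ υ : ℝ, 0 < υ → SatT2 η υ →
      relEnt Pstar (μ ⊗ₘ K) ≤ ENNReal.ofReal (κ ^ 2 * ρ * υ) * relEnt μ η) := by
  obtain ⟨hWm, hWc1, hKd⟩ := hG
  have hcpos : 0 < ρ * κ ^ 2 / 2 := by positivity
  have hLS' : ∀ x z : Ed d, relEnt (K z) (K x)
      ≤ ENNReal.ofReal (ρ * κ ^ 2 / 2 * ‖x - z‖ ^ 2) := by
    intro x z
    refine le_trans (hLS z x) ?_
    refine le_trans (mul_le_mul_right (hJ z x) _) ?_
    rw [← ENNReal.ofReal_mul (by positivity)]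
    apply ENNReal.ofReal_le_ofReal
    rw [norm_sub_rev z x]
    apply le_of_eq
    ring
  have hmeasn : Measurable fun p : Ed d × Ed d => ENNReal.ofReal (‖p.1 - p.2‖ ^ 2) :=
    (((measurable_fst.sub measurable_snd).norm.pow measurable_const)).ennreal_ofReal
  have main : ∀ π : Measure (Ed d × Ed d), isCoupling π μ η →
      relEnt Pstar (μ ⊗ₘ K) ≤ ENNReal.ofReal (ρ * κ ^ 2 / 2) *
        ∫⁻ p, ENNReal.ofReal (‖p.1 - p.2‖ ^ 2) ∂π := by
    intro π hπ
    have hπprob : IsProbabilityMeasure π := by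
      constructor
      calc π Set.univ = (π.map Prod.fst) Set.univ := by
            rw [Measure.map_apply measurable_fst MeasurableSet.univ, Set.preimage_univ]
        _ = 1 := by rw [hπ.1, measure_univ]
    obtain ⟨Q, hQp, hQc, hQb⟩ := key_bound Wf K hWm hKd (ρ * κ ^ 2 / 2) hcpos hLS'
      μ η π hπ.1 hπ.2
    refine le_trans (hmin Q hQp hQc) (le_trans hQb (le_of_eq ?_))
    simp_rw [ENNReal.ofReal_mul hcpos.le]
    rw [lintegral_const_mul _ hmeasn]
  have ha0 : (ENNReal.ofReal (ρ * κ ^ 2 / 2)) ≠ 0 := (ENNReal.ofReal_pos.mpr hcpos).ne'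
  have hat : (ENNReal.ofReal (ρ * κ ^ 2 / 2)) ≠ ⊤ := ENNReal.ofReal_ne_top
  have part1 : relEnt Pstar (μ ⊗ₘ K) ≤ ENNReal.ofReal (ρ * κ ^ 2 / 2) * W2sq μ η := by
    rw [mul_comm, ← ENNReal.div_le_iff_le_mul (Or.inl ha0) (Or.inl hat), W2sq]
    refine le_iInf₂ fun π hπ => ?_
    rw [ENNReal.div_le_iff_le_mul (Or.inl ha0) (Or.inl hat), mul_comm]
    exact main π hπ
  refine ⟨part1, fun υ hυ hT2 => ?_, fun υ hυ hT2 => ?_⟩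
  · -- T2 for μ
    have h2 := hT2 η inferInstance
    have h12 : (2 : ℝ≥0∞) * (1 / 2) = 1 := by
      rw [one_div, ENNReal.mul_inv_cancel (by norm_num) (by norm_num)]
    have hW : W2sq μ η ≤ 2 * (ENNReal.ofReal υ * relEnt η μ) := by
      refine le_trans (W2sq_le_symm μ η) ?_
      calc W2sq η μ = 2 * ((1 / 2 : ℝ≥0∞) * W2sq η μ) := by
            rw [← mul_assoc, h12, one_mul]
        _ ≤ 2 * (ENNReal.ofReal υ * relEnt η μ) := mul_le_mul_right h2 2
    calc relEnt Pstar (μ ⊗ₘ K) ≤ ENNReal.ofReal (ρ * κ ^ 2 / 2) * W2sq μ η := part1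
      _ ≤ ENNReal.ofReal (ρ * κ ^ 2 / 2) * (2 * (ENNReal.ofReal υ * relEnt η μ)) :=
          mul_le_mul_right hW _
      _ = ENNReal.ofReal (κ ^ 2 * ρ * υ) * relEnt η μ := by
          rw [← mul_assoc, ← mul_assoc]
          congr 1
          rw [show ((2 : ℝ≥0∞)) = ENNReal.ofReal 2 from (ENNReal.ofReal_ofNat 2).symm,
            ← ENNReal.ofReal_mul (by positivity), ← ENNReal.ofReal_mul (by positivity)]
          congr 1
          ring
  · -- T2 for η
    have h2 := hT2 μ inferInstance
    have h12 : (2 : ℝ≥0∞) * (1 / 2) = 1 := by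
      rw [one_div, ENNReal.mul_inv_cancel (by norm_num) (by norm_num)]
    have hW : W2sq μ η ≤ 2 * (ENNReal.ofReal υ * relEnt μ η) := by
      calc W2sq μ η = 2 * ((1 / 2 : ℝ≥0∞) * W2sq μ η) := by
            rw [← mul_assoc, h12, one_mul]
        _ ≤ 2 * (ENNReal.ofReal υ * relEnt μ η) := mul_le_mul_right h2 2
    calc relEnt Pstar (μ ⊗ₘ K) ≤ ENNReal.ofReal (ρ * κ ^ 2 / 2) * W2sq μ η := part1
      _ ≤ ENNReal.ofReal (ρ * κ ^ 2 / 2) * (2 * (ENNReal.ofReal υ * relEnt μ η)) :=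
          mul_le_mul_right hW _
      _ = ENNReal.ofReal (κ ^ 2 * ρ * υ) * relEnt μ η := by
          rw [← mul_assoc, ← mul_assoc]
          congr 1
          rw [show ((2 : ℝ≥0∞)) = ENNReal.ofReal 2 from (ENNReal.ofReal_ofNat 2).symm,
            ← ENNReal.ofReal_mul (by positivity), ← ENNReal.ofReal_mul (by positivity)]
          congr 1
          ring
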